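/- arXiv:2102.07667 — 2 statements merged into one kernel-verified Lean document; each statement's English description precedes it below -/
import Mathlib

section
/- Every treelike snark admits a 2-bisection, i.e., a partition of its vertex set into two colour classes of equal size such that every connected component of the subgraph induced by either colour class has at most 2 vertices. -/
/-- Vertices of a (fixed) Petersen 4-pole: the Petersen graph (Kneser graph on 2-subsets
of `Fin 5`) minus the two adjacent vertices `s = {0,1}` and `t = {2,3}`. -/
abbrev PoleVert : Type :=
  {p : Finset (Fin 5) // p.card = 2 ∧ p ≠ ({0,1} : Finset (Fin 5)) ∧ p ≠ ({2,3} : Finset (Fin 5))}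

/-- Endvertex of the first left dangling edge (a neighbour of `s = {0,1}` other than `t`). -/
def L1 : PoleVert := ⟨{2,4}, by decide⟩
/-- Endvertex of the second left dangling edge. -/
def L2 : PoleVert := ⟨{3,4}, by decide⟩
/-- Endvertex of the first right dangling edge (a neighbour of `t = {2,3}` other than `s`). -/
def R1 : PoleVert := ⟨{0,4}, by decide⟩
/-- Endvertex of the second right dangling edge. -/
def R2 : PoleVert := ⟨{1,4}, by decide⟩

/-- Vertices of a treelike snark built from a tree on `V` with `n` leaves: the tree
vertices, two pendant vertices `(i,0), (i,1)` for the `i`-th leaf, and a copy of the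
Petersen 4-pole for each of the `n` edges of the circuit `K`. -/
abbrev SnarkVert (V : Type*) (n : ℕ) : Type _ := V ⊕ ((ZMod n × Fin 2) ⊕ (ZMod n × PoleVert))

/-- The treelike snark built from a tree `T` whose leaves are `ℓ 0, ℓ 1, ..., ℓ (n-1)` in
the (clockwise) cyclic order of the circuit `K`.  For each leaf `ℓ i` we add the pendant
vertices `(i,0)` and `(i,1)`, and the edge `ℓ i — ℓ (i+1)` of `K` is replaced by the `i`-th
Petersen 4-pole, whose left dangling edges are joined to `(i,0)` and `(i,1)` and whose right
dangling edges are joined to `(i+1,0)` and `(i+1,1)`. -/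
def treelikeSnark {V : Type*} (n : ℕ) (T : SimpleGraph V) (ℓ : ZMod n → V) :
    SimpleGraph (SnarkVert V n) :=
  SimpleGraph.fromRel (fun a b =>
    -- edges of the tree T
    (∃ u v : V, T.Adj u v ∧ a = Sum.inl u ∧ b = Sum.inl v) ∨
    -- pendant edges at the leaves
    (∃ (i : ZMod n) (j : Fin 2), a = Sum.inl (ℓ i) ∧ b = Sum.inr (Sum.inl (i, j))) ∨
    -- internal edges of each Petersen 4-pole (Kneser adjacency)
    (∃ (i : ZMod n) (p q : PoleVert), Disjoint p.1 q.1 ∧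
        a = Sum.inr (Sum.inr (i, p)) ∧ b = Sum.inr (Sum.inr (i, q))) ∨
    -- the dangling edges of the i-th Petersen 4-pole, joined to the pendant vertices
    (∃ i : ZMod n,
      (a = Sum.inr (Sum.inl (i, 0)) ∧ b = Sum.inr (Sum.inr (i, L1))) ∨
      (a = Sum.inr (Sum.inl (i, 1)) ∧ b = Sum.inr (Sum.inr (i, L2))) ∨
      (a = Sum.inr (Sum.inl (i + 1, 0)) ∧ b = Sum.inr (Sum.inr (i, R1))) ∨
      (a = Sum.inr (Sum.inl (i + 1, 1)) ∧ b = Sum.inr (Sum.inr (i, R2)))))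

/-- A 2-bisection of `G`. -/
def TwoBisection {V : Type*} [Fintype V] (G : SimpleGraph V) (c : V → Fin 2) : Prop :=
  (Finset.univ.filter fun v => c v = 0).card = (Finset.univ.filter fun v => c v = 1).card ∧
  ∀ i : Fin 2, ∀ K : (G.induce {v | c v = i}).ConnectedComponent, K.supp.ncard ≤ 2

/-- The data `(n, T, ℓ)` defines a treelike snark: `T` is a tree all of whose vertices have
degree 1 or 3 (a cubic tree), `ℓ` is a bijective enumeration of its `n ≥ 3` leaves, and the
cyclic order `ℓ` of the leaves comes from a planar embedding of `T` (equivalently, for every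
edge of `T` the leaves lying on one side form a contiguous cyclic arc), so that `T` together
with the circuit `ℓ 0, ℓ 1, …, ℓ (n-1), ℓ 0` is a cubic Halin graph. -/
structure IsTreelikeStructure {V : Type*} (n : ℕ) (T : SimpleGraph V) (ℓ : ZMod n → V) :
    Prop where
  tree : T.IsTree
  cubic : ∀ v : V, (T.neighborSet v).ncard = 1 ∨ (T.neighborSet v).ncard = 3
  three_le : 3 ≤ n
  inj : Function.Injective ℓ
  isLeaf : ∀ i : ZMod n, (T.neighborSet (ℓ i)).ncard = 1
  surjOnLeaves : ∀ v : V, (T.neighborSet v).ncard = 1 → ∃ i : ZMod n, v = ℓ i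
  planar : ∀ u v : V, T.Adj u v →
    ∃ (a : ZMod n) (k : ℕ),
      {i : ZMod n | (T.deleteEdges {s(u, v)}).Reachable u (ℓ i)} =
        {x : ZMod n | ∃ m : ℕ, m < k ∧ x = a + (m : ZMod n)}


/-!
Color the tree properly with two colors, color `0` being used at most half of the time; a cubic
tree with `n` leaves has `2n - 2` vertices. Mark `n - 1 - #{color-0 tree vertices}` leaves of
color `1`. The two pendant vertices of a leaf get colors `0, 0` if it is marked and `1, 0`
otherwise, and each Petersen 4-pole gets one of three colorings, chosen by the marks of its two
end leaves, with four vertices of each color. Every mark moves one pendant vertex from color `1`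
to color `0`, so the classes become equal. In this coloring every vertex has at most one
neighbor of its own color, which bounds the monochromatic components by two vertices.
-/

open Finset Function

theorem SimpleGraph.ConnectedComponent.ncard_supp_le_two {W : Type*} {H : SimpleGraph W}
    (hH : ∀ ⦃x y z⦄, H.Adj x y → H.Adj x z → y = z) (K : H.ConnectedComponent) :
    K.supp.ncard ≤ 2 := by
  obtain ⟨v, rfl⟩ := K.exists_rep
  have hwalk : ∀ {a b} (_ : H.Walk a b), b = a ∨ H.Adj a b := by
    intro a b p
    induction p with
    | nil => exact .inl rfl
    | cons hau _ ih =>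
      rcases ih with rfl | hub
      · exact .inr hau
      · exact .inl (hH hau.symm hub).symm
  have hsupp : (H.connectedComponentMk v).supp ⊆ insert v (H.neighborSet v) := by
    intro w hw
    obtain ⟨p⟩ := (ConnectedComponent.exact hw).symm
    exact hwalk p
  have hN : (H.neighborSet v).Subsingleton := fun y hy z hz => hH hy hz
  have : Finite (H.neighborSet v) := hN.finite
  calc _ ≤ (insert v (H.neighborSet v)).ncard := Set.ncard_le_ncard hsupp (hN.finite.insert v)
    _ ≤ (H.neighborSet v).ncard + 1 := Set.ncard_insert_le _ _
    _ ≤ 2 := by have := Set.ncard_le_one_iff_subsingleton.2 hN; omega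

theorem SimpleGraph.ConnectedComponent.ncard_supp_induce_le_two {W : Type*} {G : SimpleGraph W}
    {s : Set W} (f : W → W) (hf : ∀ ⦃x y⦄, x ∈ s → y ∈ s → G.Adj x y → y = f x)
    (K : (G.induce s).ConnectedComponent) : K.supp.ncard ≤ 2 :=
  K.ncard_supp_le_two fun x y z hxy hxz =>
    Subtype.ext ((hf x.2 y.2 hxy).trans (hf x.2 z.2 hxz).symm)

theorem Fin.card_filter_eq_zero_add_card_filter_eq_one {X : Type*} [Fintype X] (c : X → Fin 2) :
    #{x | c x = 0} + #{x | c x = 1} = Fintype.card X := by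
  have : univ.filter (fun x => c x = 1) = univ.filter fun x => ¬c x = 0 :=
    filter_congr fun x _ => by generalize c x = a; revert a; decide
  rw [this, card_filter_add_card_filter_not, card_univ]

theorem SimpleGraph.Coloring.exists_two_mul_card_le {W : Type*} [Fintype W] {G : SimpleGraph W}
    (C : G.Coloring (Fin 2)) : ∃ C' : G.Coloring (Fin 2), 2 * #{v | C' v = 0} ≤ Fintype.card W := by
  have hC := Fin.card_filter_eq_zero_add_card_filter_eq_one C
  by_cases h : 2 * #{v | C v = 0} ≤ Fintype.card W
  · exact ⟨C, h⟩
  refine ⟨Coloring.mk (fun v => Fin.rev (C v)) fun hvw => by simpa using C.valid hvw, ?_⟩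
  have : #{v | Fin.rev (C v) = 0} = #{v | C v = 1} := by
    congr 1; ext v; simp [Fin.rev_eq_iff]
  change 2 * #{v | Fin.rev (C v) = 0} ≤ _
  omega

theorem SimpleGraph.IsTree.card_add_two_eq_two_mul_card_leaves {V : Type*} [Fintype V]
    {T : SimpleGraph V} [DecidableRel T.Adj] (hT : T.IsTree)
    (hdeg : ∀ v, T.degree v = 1 ∨ T.degree v = 3) :
    Fintype.card V + 2 = 2 * #{v | T.degree v = 1} := by
  have hsum : ∑ v, T.degree v = #{v | T.degree v = 1} + 3 * #{v | ¬T.degree v = 1} := by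
    rw [← sum_filter_add_sum_filter_not univ (fun v => T.degree v = 1), card_eq_sum_ones,
      mul_comm, ← smul_eq_mul, ← sum_const]
    congr 1
    · exact sum_congr rfl fun v hv => (mem_filter.1 hv).2
    · exact sum_congr rfl fun v hv => (hdeg v).resolve_left (mem_filter.1 hv).2
  have hsplit := card_filter_add_card_filter_not (s := univ) (fun v => T.degree v = 1)
  rw [card_univ] at hsplit
  have := T.sum_degrees_eq_twice_card_edges
  have := hT.card_edgeFinset
  omega

theorem IsTreelikeStructure.card_add_two {V : Type*} [Fintype V] {n : ℕ} [NeZero n]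
    {T : SimpleGraph V} {ℓ : ZMod n → V} (h : IsTreelikeStructure n T ℓ) :
    Fintype.card V + 2 = 2 * n := by
  classical
  have hdeg : ∀ v, (T.neighborSet v).ncard = T.degree v := fun v => by
    rw [← Nat.card_coe_set_eq, Nat.card_eq_fintype_card, SimpleGraph.card_neighborSet_eq_degree]
  have hleaves : ({v | T.degree v = 1} : Finset V) = univ.image ℓ := by
    ext v
    simp only [mem_filter, mem_univ, true_and, mem_image, ← hdeg]
    refine ⟨fun hv => ?_, by rintro ⟨i, rfl⟩; exact h.isLeaf i⟩
    obtain ⟨i, rfl⟩ := h.surjOnLeaves v hv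
    exact ⟨i, rfl⟩
  rw [h.tree.card_add_two_eq_two_mul_card_leaves fun v => by simpa [hdeg] using h.cubic v,
    hleaves, card_image_of_injective _ h.inj, card_univ, ZMod.card]

namespace TreelikeSnark

def poleVert (s : Finset (Fin 5))
    (hs : s.card = 2 ∧ s ≠ {0,1} ∧ s ≠ {2,3} := by decide) : PoleVert :=
  ⟨s, hs⟩

/- The `Bool` arguments are leaf marks: of the leaf carrying the pendant vertex, and of the two
end leaves of the pole. -/
def pendantColor (a : Bool) (j : Fin 2) : Fin 2 :=
  if j = 0 ∧ a = false then 1 else 0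

def poleZeroClass : Bool → Bool → Finset (Finset (Fin 5))
  | false, _ => {{0,2}, {0,3}, {0,4}, {2,4}}
  | true, true => {{0,2}, {0,3}, {1,2}, {1,3}}
  | true, false => {{0,3}, {0,4}, {1,3}, {3,4}}

def poleColor (a b : Bool) (q : PoleVert) : Fin 2 :=
  if q.1 ∈ poleZeroClass a b then 0 else 1

def poleMatch : Bool → Bool → Equiv.Perm PoleVert
  | false, _ =>
    Equiv.swap (poleVert {0,3}) (poleVert {2,4}) * Equiv.swap (poleVert {1,2}) (poleVert {3,4})
  | true, true =>
    Equiv.swap (poleVert {0,2}) (poleVert {1,3}) * Equiv.swap (poleVert {0,3}) (poleVert {1,2})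
  | true, false =>
    Equiv.swap (poleVert {0,4}) (poleVert {1,3}) * Equiv.swap (poleVert {0,2}) (poleVert {1,4})

theorem eq_poleMatch_of_disjoint (a b : Bool) (p q : PoleVert) (hpq : Disjoint p.1 q.1)
    (h : poleColor a b p = poleColor a b q) : q = poleMatch a b p := by
  revert a b p q; decide

theorem poleColor_L2_ne_of_disjoint (q : PoleVert) (hq : Disjoint L2.1 q.1) :
    poleColor true false L2 ≠ poleColor true false q := by
  revert q; decide

theorem poleColor_R1_ne_of_disjoint (b : Bool) (q : PoleVert) (hq : Disjoint R1.1 q.1) :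
    poleColor false b R1 ≠ poleColor false b q := by
  revert b q; decide

theorem eq_pendantColor (a : Bool) (j c : Fin 2) (ha : a = true → c = 1)
    (h : c = pendantColor a j) : a = false ∧ j = c + 1 := by
  revert a j c; decide

theorem pendantColor_eq_poleColor (a b : Bool) :
    pendantColor a 0 ≠ poleColor a b L1 ∧
    (pendantColor a 1 = poleColor a b L2 → a = true ∧ b = false) ∧
    (pendantColor b 0 = poleColor a b R1 → a = false ∧ b = true) ∧
    pendantColor b 1 ≠ poleColor a b R2 := by
  revert a b; decide

theorem sum_pendantColor_eq_zero (a : Bool) :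
    ∑ j, (if pendantColor a j = 0 then 1 else 0) = 1 + if a then 1 else 0 := by
  revert a; decide

theorem sum_poleColor_eq_zero (a b : Bool) :
    ∑ q, (if poleColor a b q = 0 then 1 else 0) = 4 := by
  revert a b; decide

variable {V : Type*} {n : ℕ}

def snarkColoring (φ : V → Fin 2) (σ : ZMod n → Bool) : SnarkVert V n → Fin 2
  | .inl v => φ v
  | .inr (.inl (i, j)) => pendantColor (σ i) j
  | .inr (.inr (i, q)) => poleColor (σ i) (σ (i + 1)) q

/- The only neighbor of `x` that may share its color; `ι` is meant to be a left inverse of `ℓ`. -/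
def partner (ℓ : ZMod n → V) (ι : V → ZMod n) (φ : V → Fin 2) (σ : ZMod n → Bool) :
    SnarkVert V n → SnarkVert V n
  | .inl v => .inr (.inl (ι v, φ v + 1))
  | .inr (.inl (i, j)) =>
    if σ i then .inr (.inr (if j = 0 then (i - 1, R1) else (i, L2))) else .inl (ℓ i)
  | .inr (.inr (i, q)) =>
    if σ i = true ∧ σ (i + 1) = false ∧ q = L2 then .inr (.inl (i, 1))
    else if σ i = false ∧ σ (i + 1) = true ∧ q = R1 then .inr (.inl (i + 1, 0))
    else .inr (.inr (i, poleMatch (σ i) (σ (i + 1)) q))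

def Matched {W : Type*} (c : W → Fin 2) (f : W → W) (x y : W) : Prop :=
  c x = c y → y = f x ∧ x = f y

theorem Matched.symm {W : Type*} {c : W → Fin 2} {f : W → W} {x y : W}
    (h : Matched c f x y) : Matched c f y x :=
  fun hc => (h hc.symm).symm

variable (ℓ : ZMod n → V) (ι : V → ZMod n) (φ : V → Fin 2) (σ : ZMod n → Bool)

theorem matched_leaf_pendant (hι : LeftInverse ι ℓ) (hσ : ∀ i, σ i = true → φ (ℓ i) = 1)
    (i : ZMod n) (j : Fin 2) :
    Matched (snarkColoring φ σ) (partner ℓ ι φ σ) (.inl (ℓ i)) (.inr (.inl (i, j))) := by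
  intro hc
  obtain ⟨hσi, rfl⟩ := eq_pendantColor (σ i) j (φ (ℓ i)) (hσ i) hc
  simp [partner, hι i, hσi]

theorem eq_partner_of_disjoint (i : ZMod n) (p q : PoleVert) (hpq : Disjoint p.1 q.1)
    (hc : poleColor (σ i) (σ (i + 1)) p = poleColor (σ i) (σ (i + 1)) q) :
    .inr (.inr (i, q)) = partner ℓ ι φ σ (.inr (.inr (i, p))) := by
  have hL2 : ¬(σ i = true ∧ σ (i + 1) = false ∧ p = L2) := by
    rintro ⟨ha, hb, rfl⟩
    rw [ha, hb] at hc
    exact poleColor_L2_ne_of_disjoint q hpq hc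
  have hR1 : ¬(σ i = false ∧ σ (i + 1) = true ∧ p = R1) := by
    rintro ⟨ha, hb, rfl⟩
    rw [ha] at hc
    exact poleColor_R1_ne_of_disjoint _ q hpq hc
  simp only [partner, if_neg hL2, if_neg hR1, ← eq_poleMatch_of_disjoint _ _ p q hpq hc]

theorem matched_pole_pole (i : ZMod n) (p q : PoleVert) (hpq : Disjoint p.1 q.1) :
    Matched (snarkColoring φ σ) (partner ℓ ι φ σ) (.inr (.inr (i, p))) (.inr (.inr (i, q))) :=
  fun hc => ⟨eq_partner_of_disjoint ℓ ι φ σ i p q hpq hc,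
    eq_partner_of_disjoint ℓ ι φ σ i q p hpq.symm hc.symm⟩

theorem matched_pendant_pole (i : ZMod n) :
    let M := Matched (snarkColoring φ σ) (partner ℓ ι φ σ)
    M (.inr (.inl (i, 0))) (.inr (.inr (i, L1))) ∧ M (.inr (.inl (i, 1))) (.inr (.inr (i, L2))) ∧
    M (.inr (.inl (i + 1, 0))) (.inr (.inr (i, R1))) ∧
    M (.inr (.inl (i + 1, 1))) (.inr (.inr (i, R2))) := by
  obtain ⟨hL1, hL2, hR1, hR2⟩ := pendantColor_eq_poleColor (σ i) (σ (i + 1))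
  refine ⟨fun hc => absurd hc hL1, fun hc => ?_, fun hc => ?_, fun hc => absurd hc hR2⟩
  · obtain ⟨ha, hb⟩ := hL2 hc
    simp [partner, ha, hb]
  · obtain ⟨ha, hb⟩ := hR1 hc
    simp [partner, ha, hb]

theorem matched_of_adj (T : SimpleGraph V) (hι : LeftInverse ι ℓ)
    (hφ : ∀ ⦃u v⦄, T.Adj u v → φ u ≠ φ v) (hσ : ∀ i, σ i = true → φ (ℓ i) = 1)
    {x y : SnarkVert V n} (hxy : (treelikeSnark n T ℓ).Adj x y) :
    Matched (snarkColoring φ σ) (partner ℓ ι φ σ) x y := by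
  rw [treelikeSnark, SimpleGraph.fromRel_adj] at hxy
  obtain ⟨-, h | h⟩ := hxy
  on_goal 2 => refine Matched.symm ?_
  all_goals
    rcases h with ⟨u, v, huv, rfl, rfl⟩ | ⟨i, j, rfl, rfl⟩ | ⟨i, p, q, hpq, rfl, rfl⟩ |
      ⟨i, ⟨rfl, rfl⟩ | ⟨rfl, rfl⟩ | ⟨rfl, rfl⟩ | ⟨rfl, rfl⟩⟩
    exacts [fun hc => absurd hc (hφ huv), matched_leaf_pendant ℓ ι φ σ hι hσ i j,
      matched_pole_pole ℓ ι φ σ i p q hpq, (matched_pendant_pole ℓ ι φ σ i).1,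
      (matched_pendant_pole ℓ ι φ σ i).2.1, (matched_pendant_pole ℓ ι φ σ i).2.2.1,
      (matched_pendant_pole ℓ ι φ σ i).2.2.2]

section Counting

variable [Fintype V] [NeZero n]

theorem card_snarkColoring_eq_zero (φ : V → Fin 2) (σ : ZMod n → Bool) :
    #{x | snarkColoring φ σ x = 0} = #{v | φ v = 0} + #{i | σ i = true} + 5 * n := by
  have htree : ∑ v, (if snarkColoring φ σ (.inl v) = 0 then 1 else 0) = #{v | φ v = 0} :=
    (card_filter _ _).symm
  have hpendant (i : ZMod n) :
      ∑ j, (if snarkColoring φ σ (.inr (.inl (i, j))) = 0 then 1 else 0) =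
        1 + if σ i = true then 1 else 0 :=
    sum_pendantColor_eq_zero (σ i)
  have hpole (i : ZMod n) :
      ∑ q, (if snarkColoring φ σ (.inr (.inr (i, q))) = 0 then 1 else 0) = 4 :=
    sum_poleColor_eq_zero (σ i) (σ (i + 1))
  rw [card_filter, card_filter (fun i => σ i = true), Fintype.sum_sum_type, Fintype.sum_sum_type,
    Fintype.sum_prod_type, Fintype.sum_prod_type, htree]
  simp only [hpendant, hpole, sum_add_distrib, sum_const, card_univ, ZMod.card, smul_eq_mul]
  ring

theorem card_poleVert : Fintype.card PoleVert = 8 := by decide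

theorem card_snarkVert : Fintype.card (SnarkVert V n) = Fintype.card V + 10 * n := by
  simp only [Fintype.card_sum, Fintype.card_prod, ZMod.card, Fintype.card_fin, card_poleVert]
  ring

theorem exists_marking {ℓ : ZMod n → V} (hℓ : Injective ℓ) (φ : V → Fin 2)
    (hφ : #{v | φ v = 0} < n) :
    ∃ σ : ZMod n → Bool, (∀ i, σ i = true → φ (ℓ i) = 1) ∧
      #{i | σ i = true} + #{v | φ v = 0} + 1 = n := by
  have hle : #{i | φ (ℓ i) = 0} ≤ #{v | φ v = 0} :=
    card_le_card_of_injOn ℓ (fun i hi => by simpa using hi) hℓ.injOn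
  have hsplit := Fin.card_filter_eq_zero_add_card_filter_eq_one (φ ∘ ℓ)
  rw [ZMod.card] at hsplit
  obtain ⟨S, hS, hScard⟩ := exists_subset_card_eq (s := {i | φ (ℓ i) = 1})
    (n := n - 1 - #{v | φ v = 0}) (by simp only [comp_apply] at hsplit; omega)
  refine ⟨fun i => decide (i ∈ S), fun i hi => (mem_filter.1 (hS (by simpa using hi))).2, ?_⟩
  simp only [decide_eq_true_eq, filter_mem_eq_inter, univ_inter, hScard]
  omega

end Counting

end TreelikeSnark

open TreelikeSnark

theorem treelike_snark_has_two_bisection {V : Type*} [Fintype V] (n : ℕ) [NeZero n]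
    (T : SimpleGraph V) (ℓ : ZMod n → V) (h : IsTreelikeStructure n T ℓ) :
    ∃ c : SnarkVert V n → Fin 2, TwoBisection (treelikeSnark n T ℓ) c := by
  obtain ⟨φ, hφ⟩ := h.tree.isBipartite.some.exists_two_mul_card_le
  have hV := h.card_add_two
  obtain ⟨σ, hσ, hσcard⟩ := exists_marking h.inj φ (by omega)
  refine ⟨snarkColoring φ σ, ?_, fun d K => ?_⟩
  · have hsplit := Fin.card_filter_eq_zero_add_card_filter_eq_one (snarkColoring φ σ)
    have hzero := card_snarkColoring_eq_zero φ σ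
    rw [card_snarkVert] at hsplit
    omega
  · refine K.ncard_supp_induce_le_two (partner ℓ (invFun ℓ) φ σ) fun x y hx hy hxy => ?_
    exact (matched_of_adj ℓ _ φ σ T (leftInverse_invFun h.inj) (fun _ _ => φ.valid) hσ hxy
      (hx.trans hy.symm)).1
end

section
/- The smallest treelike snark, namely the 34-vertex treelike snark obtained from the Halin graph whose tree T is the star K_{1,3} (one vertex of degree 3 and three leaves) and whose circuit K is the triangle on the three leaves (so the construction uses three Petersen 4-poles), admits a 2-bisection. -/
/-- The star `K_{1,3}`: the tree on `Fin 4` whose centre is `3` and whose leaves are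
`0, 1, 2` (one vertex of degree 3 and three leaves, no vertex of degree 2). -/
def starTree : SimpleGraph (Fin 4) := SimpleGraph.fromRel (fun _ b => b = 3)

open Fin.NatCast in
/-- The enumeration of the three leaves `0, 1, 2` of the star, giving the triangle
circuit `K` on the leaves of the Halin graph. -/
def starLeaves : ZMod 3 → Fin 4 := fun i => (i.val : Fin 4)

/-- The smallest treelike snark: the 34-vertex treelike snark obtained from the Halin graph
whose tree is the star `K_{1,3}` and whose circuit is the triangle on its three leaves
(so three Petersen 4-poles are used). -/
def smallestTreelikeSnark : SimpleGraph (SnarkVert (Fin 4) 3) :=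
  treelikeSnark 3 starTree starLeaves

/-!
Colour 17 vertices black and 17 white so that the monochromatic edges are 12 pairwise disjoint
edges (`SmallestTreelikeSnark.monochromaticEdges`). Then every vertex has at most one neighbour of
its own colour, and in a graph of maximum degree at most one every component has at most two
vertices.
-/

namespace SimpleGraph

variable {V : Type*} {G : SimpleGraph V}

lemma Reachable.eq_or_adj_of_subsingleton_neighborSet
    (h : ∀ v, (G.neighborSet v).Subsingleton) {v w : V} (hvw : G.Reachable v w) :
    w = v ∨ G.Adj v w := by
  obtain ⟨p⟩ := hvw
  induction p with
  | nil => exact .inl rfl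
  | @cons u x y hux _ ih =>
    rcases ih with rfl | hxy
    · exact .inr hux
    · exact .inl (h x hxy hux.symm)

lemma ConnectedComponent.ncard_supp_le_two_of_subsingleton_neighborSet
    (h : ∀ v, (G.neighborSet v).Subsingleton) (K : G.ConnectedComponent) :
    K.supp.ncard ≤ 2 := by
  induction K using ConnectedComponent.ind with | _ v
  have hsupp : (G.connectedComponentMk v).supp ⊆ insert v (G.neighborSet v) := fun w hw =>
    (ConnectedComponent.eq.mp hw).symm.eq_or_adj_of_subsingleton_neighborSet h
  calc (G.connectedComponentMk v).supp.ncard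
      ≤ (insert v (G.neighborSet v)).ncard := Set.ncard_le_ncard hsupp ((h v).finite.insert v)
    _ ≤ (G.neighborSet v).ncard + 1 := Set.ncard_insert_le _ _
    _ ≤ 2 := by
      have := (Set.ncard_le_one (h v).finite).mpr fun a ha b hb => h v ha hb
      omega

lemma neighborSet_induce_subsingleton {s : Set V} (p : V → V)
    (hp : ∀ v ∈ s, ∀ w ∈ s, G.Adj v w → w = p v) (v : s) :
    ((G.induce s).neighborSet v).Subsingleton := fun x hx y hy =>
  Subtype.ext ((hp _ v.2 _ x.2 hx).trans (hp _ v.2 _ y.2 hy).symm)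

lemma fromRel_adj_induction {r P : V → V → Prop}
    (symm : ∀ a b, P a b → P b a) (of_rel : ∀ a b, r a b → P a b) {a b : V}
    (h : (fromRel r).Adj a b) : P a b :=
  h.2.elim (of_rel a b) fun hba => symm b a (of_rel b a hba)

end SimpleGraph

open SimpleGraph

theorem twoBisection_of_monochromatic_adj_eq {V : Type*} [Fintype V] {G : SimpleGraph V}
    {c : V → Fin 2} (p : V → V)
    (hcard : (Finset.univ.filter fun v => c v = 0).card =
      (Finset.univ.filter fun v => c v = 1).card)
    (hp : ∀ v w, G.Adj v w → c v = c w → w = p v) :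
    TwoBisection G c :=
  ⟨hcard, fun _ => ConnectedComponent.ncard_supp_le_two_of_subsingleton_neighborSet <|
    neighborSet_induce_subsingleton p fun v hv w hw hvw => hp v w hvw (hv.trans hw.symm)⟩

lemma treelikeSnark_adj_induction {V : Type*} {n : ℕ} {T : SimpleGraph V} {ℓ : ZMod n → V}
    {P : SnarkVert V n → SnarkVert V n → Prop} (symm : ∀ a b, P a b → P b a)
    (tree : ∀ u v, T.Adj u v → P (.inl u) (.inl v))
    (pendant : ∀ i j, P (.inl (ℓ i)) (.inr (.inl (i, j))))
    (pole : ∀ i (p q : PoleVert), Disjoint p.1 q.1 →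
      P (.inr (.inr (i, p))) (.inr (.inr (i, q))))
    (dangling : ∀ i,
      P (.inr (.inl (i, 0))) (.inr (.inr (i, L1))) ∧
        P (.inr (.inl (i, 1))) (.inr (.inr (i, L2))) ∧
        P (.inr (.inl (i + 1, 0))) (.inr (.inr (i, R1))) ∧
        P (.inr (.inl (i + 1, 1))) (.inr (.inr (i, R2))))
    {a b : SnarkVert V n} (h : (treelikeSnark n T ℓ).Adj a b) : P a b := by
  refine fromRel_adj_induction symm ?_ h
  rintro a b (⟨u, v, huv, rfl, rfl⟩ | ⟨i, j, rfl, rfl⟩ | ⟨i, p, q, hpq, rfl, rfl⟩ |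
    ⟨i, ⟨rfl, rfl⟩ | ⟨rfl, rfl⟩ | ⟨rfl, rfl⟩ | ⟨rfl, rfl⟩⟩)
  · exact tree u v huv
  · exact pendant i j
  · exact pole i p q hpq
  · exact (dangling i).1
  · exact (dangling i).2.1
  · exact (dangling i).2.2.1
  · exact (dangling i).2.2.2

namespace SmallestTreelikeSnark

abbrev treeVert (u : Fin 4) : SnarkVert (Fin 4) 3 := Sum.inl u

abbrev pendant (i : ZMod 3) (j : Fin 2) : SnarkVert (Fin 4) 3 := Sum.inr (Sum.inl (i, j))

abbrev poleVert (i : ZMod 3) (p : PoleVert) : SnarkVert (Fin 4) 3 := Sum.inr (Sum.inr (i, p))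

abbrev pole (i : ZMod 3) (p : Finset (Fin 5))
    (hp : p.card = 2 ∧ p ≠ {0,1} ∧ p ≠ {2,3} := by decide) : SnarkVert (Fin 4) 3 :=
  poleVert i ⟨p, hp⟩

def blackVertices : Finset (SnarkVert (Fin 4) 3) :=
  {treeVert 0, treeVert 3, pendant 1 1, pendant 2 1,
    pole 0 {0,2}, pole 0 {0,3}, pole 0 {0,4}, pole 0 {2,4}, pole 0 {3,4},
    pole 1 {0,4}, pole 1 {1,4}, pole 1 {2,4}, pole 1 {3,4},
    pole 2 {1,2}, pole 2 {1,3}, pole 2 {1,4}, pole 2 {2,4}}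

def coloring (v : SnarkVert (Fin 4) 3) : Fin 2 := if v ∈ blackVertices then 0 else 1

def monochromaticEdges : List (SnarkVert (Fin 4) 3 × SnarkVert (Fin 4) 3) :=
  [(treeVert 0, treeVert 3), (treeVert 1, pendant 1 0), (treeVert 2, pendant 2 0),
    (pendant 0 0, pole 2 {0,4}), (pendant 1 1, pole 1 {3,4}), (pendant 2 1, pole 1 {1,4}),
    (pole 0 {0,2}, pole 0 {3,4}), (pole 0 {0,3}, pole 0 {2,4}),
    (pole 1 {0,2}, pole 1 {1,3}), (pole 1 {0,3}, pole 1 {1,2}),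
    (pole 2 {0,2}, pole 2 {3,4}), (pole 2 {1,3}, pole 2 {2,4})]

def partner (v : SnarkVert (Fin 4) 3) : SnarkVert (Fin 4) 3 :=
  ((monochromaticEdges ++ monochromaticEdges.map Prod.swap).lookup v).getD v

def Matched (v w : SnarkVert (Fin 4) 3) : Prop :=
  coloring v = coloring w → w = partner v ∧ v = partner w

lemma Matched.symm (v w : SnarkVert (Fin 4) 3) (h : Matched v w) : Matched w v :=
  fun hc => (h hc.symm).symm

instance : DecidableRel Matched := fun _ _ => by unfold Matched; infer_instance

instance : DecidableRel starTree.Adj := fun a b =>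
  decidable_of_iff _ (fromRel_adj _ a b).symm

lemma matched_tree_edge : ∀ u v, starTree.Adj u v → Matched (treeVert u) (treeVert v) := by
  decide

lemma matched_pendant_edge : ∀ i j, Matched (treeVert (starLeaves i)) (pendant i j) := by
  decide

lemma matched_pole_edge : ∀ i (p q : PoleVert), Disjoint p.1 q.1 →
    Matched (poleVert i p) (poleVert i q) := by
  decide

lemma matched_dangling_edge : ∀ i,
    Matched (pendant i 0) (poleVert i L1) ∧ Matched (pendant i 1) (poleVert i L2) ∧
      Matched (pendant (i + 1) 0) (poleVert i R1) ∧
      Matched (pendant (i + 1) 1) (poleVert i R2) := by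
  decide

lemma matched_of_adj {v w : SnarkVert (Fin 4) 3} (h : smallestTreelikeSnark.Adj v w) :
    Matched v w :=
  treelikeSnark_adj_induction Matched.symm matched_tree_edge matched_pendant_edge matched_pole_edge
    matched_dangling_edge h

lemma coloring_card :
    (Finset.univ.filter fun v => coloring v = 0).card =
      (Finset.univ.filter fun v => coloring v = 1).card := by
  decide

end SmallestTreelikeSnark

open SmallestTreelikeSnark in
/-- The smallest treelike snark (34 vertices) admits a 2-bisection. -/
theorem smallest_treelike_snark_has_two_bisection :
    ∃ c : SnarkVert (Fin 4) 3 → Fin 2, TwoBisection smallestTreelikeSnark c :=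
  ⟨coloring, twoBisection_of_monochromatic_adj_eq partner coloring_card
    fun _ _ h hc => (matched_of_adj h hc).1⟩
end
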